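/- Every irreducible crossed submodule V ⊆ k[X] has the form V = ⊕_{z ∈ C}(V₀ ⋊̃ z̄) for some z₀ ∈ Z with X-conjugacy class C (and chosen z̄ ∈ X with z = z̄⁻¹z₀z̄ for each z ∈ C), where V₀ = V ∩ J_{z₀} is nonzero and is an irreducible subrepresentation of the centralizer X_{z₀} acting on J_{z₀} by the linearized ⋊̃-action. -/
import Mathlib


/-- The linearization of the right action `⋊̃ y` on `k[X] = X →₀ k`. -/
noncomputable def linTact (k : Type*) [Field k] {X : Type*} (tact : X → X → X) (y : X) :
    (X →₀ k) →ₗ[k] (X →₀ k) :=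
  Finsupp.lmapDomain k k (fun x => tact x y)

/-- The homogeneous component `J_z = span_k ‖·‖⁻¹(z)` of `k[X]`. -/
noncomputable def Jsub (k : Type*) [Field k] {X : Type*} (norm : X → X) (z : X) :
    Submodule k (X →₀ k) :=
  Submodule.span k ((fun x => Finsupp.single x (1 : k)) '' (norm ⁻¹' {z}))

/-- A subspace `V ⊆ k[X]` is a crossed submodule if it is stable under the
linearized `⋊̃`-action of `X` and `V = ⊕_{z∈Z}(V ∩ J_z)`. -/
def IsCrossedSubmodule (k : Type*) [Field k] {X : Type*} (norm : X → X)
    (tact : X → X → X) (V : Submodule k (X →₀ k)) : Prop :=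
  (∀ y : X, V.map (linTact k tact y) ≤ V) ∧
  V = ⨆ z ∈ Set.range norm, V ⊓ Jsub k norm z

/-- A crossed submodule is irreducible if it is nonzero and the only crossed
submodules contained in it are `0` and itself. -/
def IsIrreducibleCrossedSubmodule (k : Type*) [Field k] {X : Type*} (norm : X → X)
    (tact : X → X → X) (V : Submodule k (X →₀ k)) : Prop :=
  V ≠ ⊥ ∧ IsCrossedSubmodule k norm tact V ∧
    ∀ W : Submodule k (X →₀ k), IsCrossedSubmodule k norm tact W → W ≤ V → W = ⊥ ∨ W = V

section Aux
set_option linter.unusedSectionVars false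
variable {k X : Type*} [Field k] [Group X] {G M : Subgroup X}
variable {rho : ↥M → ↥G → ↥G} {sig : ↥M → ↥G → ↥M} {norm : X → X} {tact : X → X → X}

lemma coe_unique (hbij : Function.Bijective (fun p : ↥G × ↥M => (p.1 : X) * (p.2 : X)))
    {a a' : G} {b b' : M} (h : (a : X) * b = (a' : X) * b') : a = a' ∧ b = b' := by
  have h2 : (⟨a, b⟩ : ↥G × ↥M) = ⟨a', b'⟩ := hbij.1 h
  exact ⟨congrArg Prod.fst h2, congrArg Prod.snd h2⟩

lemma exists_fact (hbij : Function.Bijective (fun p : ↥G × ↥M => (p.1 : X) * (p.2 : X)))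
    (x : X) : ∃ (v : G) (t : M), x = (v : X) * t := by
  obtain ⟨⟨v, t⟩, h⟩ := hbij.2 x
  exact ⟨v, t, h.symm⟩

lemma stilde_coe (hfact : ∀ (s : ↥M) (u : ↥G), (s : X) * (u : X) = (rho s u : X) * (sig s u : X))
    (s : M) (w : G) :
    ((sig s⁻¹ w⁻¹ : M) : X) = ((rho s⁻¹ w⁻¹ : G) : X)⁻¹ * (s : X)⁻¹ * (w : X)⁻¹ := by
  have h := hfact s⁻¹ w⁻¹
  push_cast at h
  rw [mul_assoc, h, inv_mul_cancel_left]

lemma rho_stilde (hbij : Function.Bijective (fun p : ↥G × ↥M => (p.1 : X) * (p.2 : X)))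
    (hfact : ∀ (s : ↥M) (u : ↥G), (s : X) * (u : X) = (rho s u : X) * (sig s u : X))
    (s : M) (w : G) :
    rho (sig s⁻¹ w⁻¹) w = (rho s⁻¹ w⁻¹)⁻¹ ∧ sig (sig s⁻¹ w⁻¹) w = s⁻¹ := by
  have h := hfact (sig s⁻¹ w⁻¹) w
  have hc : ((sig s⁻¹ w⁻¹ : M) : X) * w = (((rho s⁻¹ w⁻¹)⁻¹ : G) : X) * ((s⁻¹ : M) : X) := by
    rw [stilde_coe hfact s w]; push_cast; group
  exact coe_unique hbij (h.symm.trans hc)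

lemma tact_canon (hbij : Function.Bijective (fun p : ↥G × ↥M => (p.1 : X) * (p.2 : X)))
    (hfact : ∀ (s : ↥M) (u : ↥G), (s : X) * (u : X) = (rho s u : X) * (sig s u : X))
    (htact : ∀ (v u : ↥G) (t s : ↥M),
      tact ((v : X) * (t : X)) ((u : X) * (s : X)) =
        (rho (sig s⁻¹ (v * u)⁻¹) (v * u) : X) *
          ((sig s⁻¹ (v * u)⁻¹ : X) * (t : X) * (sig s⁻¹ (v * u)⁻¹ : X)⁻¹))
    (v u : G) (t s : M) :
    tact ((v : X) * t) ((u : X) * s) =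
      (((rho s⁻¹ (v * u)⁻¹)⁻¹ : G) : X) *
        ((sig s⁻¹ (v * u)⁻¹ * t * (sig s⁻¹ (v * u)⁻¹)⁻¹ : M) : X) := by
  rw [htact v u t s, (rho_stilde hbij hfact s (v * u)).1]
  push_cast
  ring_nf

lemma tact_one (hbij : Function.Bijective (fun p : ↥G × ↥M => (p.1 : X) * (p.2 : X)))
    (hfact : ∀ (s : ↥M) (u : ↥G), (s : X) * (u : X) = (rho s u : X) * (sig s u : X))
    (htact : ∀ (v u : ↥G) (t s : ↥M),
      tact ((v : X) * (t : X)) ((u : X) * (s : X)) =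
        (rho (sig s⁻¹ (v * u)⁻¹) (v * u) : X) *
          ((sig s⁻¹ (v * u)⁻¹ : X) * (t : X) * (sig s⁻¹ (v * u)⁻¹ : X)⁻¹))
    (x : X) : tact x 1 = x := by
  obtain ⟨v, t, rfl⟩ := exists_fact hbij x
  have h1 : (1 : X) = ((1 : G) : X) * ((1 : M) : X) := by simp
  have hro : rho (1 : M) v⁻¹ = v⁻¹ ∧ sig (1 : M) v⁻¹ = 1 := by
    have h := hfact 1 v⁻¹
    have hc : (((v⁻¹ : G)) : X) * ((1 : M) : X) = ((rho 1 v⁻¹ : G) : X) * ((sig 1 v⁻¹ : M) : X) := by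
      rw [← h]; push_cast; group
    have := coe_unique hbij hc
    exact ⟨this.1.symm, this.2.symm⟩
  rw [h1, tact_canon hbij hfact htact v 1 t 1]
  simp only [inv_one, mul_one, hro.1, hro.2]
  push_cast
  group

lemma norm_tact (hbij : Function.Bijective (fun p : ↥G × ↥M => (p.1 : X) * (p.2 : X)))
    (hfact : ∀ (s : ↥M) (u : ↥G), (s : X) * (u : X) = (rho s u : X) * (sig s u : X))
    (hnorm : ∀ (v : ↥G) (t : ↥M), norm ((v : X) * (t : X)) = (v : X)⁻¹ * (t : X)⁻¹ * (v : X))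
    (htact : ∀ (v u : ↥G) (t s : ↥M),
      tact ((v : X) * (t : X)) ((u : X) * (s : X)) =
        (rho (sig s⁻¹ (v * u)⁻¹) (v * u) : X) *
          ((sig s⁻¹ (v * u)⁻¹ : X) * (t : X) * (sig s⁻¹ (v * u)⁻¹ : X)⁻¹))
    (x y : X) : norm (tact x y) = y⁻¹ * norm x * y := by
  obtain ⟨v, t, rfl⟩ := exists_fact hbij x
  obtain ⟨u, s, rfl⟩ := exists_fact hbij y
  rw [tact_canon hbij hfact htact v u t s, hnorm, hnorm]
  push_cast
  rw [stilde_coe hfact s (v * u)]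
  push_cast
  group

lemma tact_mul (hbij : Function.Bijective (fun p : ↥G × ↥M => (p.1 : X) * (p.2 : X)))
    (hfact : ∀ (s : ↥M) (u : ↥G), (s : X) * (u : X) = (rho s u : X) * (sig s u : X))
    (htact : ∀ (v u : ↥G) (t s : ↥M),
      tact ((v : X) * (t : X)) ((u : X) * (s : X)) =
        (rho (sig s⁻¹ (v * u)⁻¹) (v * u) : X) *
          ((sig s⁻¹ (v * u)⁻¹ : X) * (t : X) * (sig s⁻¹ (v * u)⁻¹ : X)⁻¹))
    (x y₁ y₂ : X) : tact (tact x y₁) y₂ = tact x (y₁ * y₂) := by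
  obtain ⟨v, t, rfl⟩ := exists_fact hbij x
  obtain ⟨u₁, s₁, rfl⟩ := exists_fact hbij y₁
  obtain ⟨u₂, s₂, rfl⟩ := exists_fact hbij y₂
  set P₁ : G := rho s₁⁻¹ (v * u₁)⁻¹ with hP₁
  set st₁ : M := sig s₁⁻¹ (v * u₁)⁻¹ with hst₁
  set v' : G := P₁⁻¹ with hv'
  set t' : M := st₁ * t * st₁⁻¹ with ht'
  have h1 : tact ((v : X) * t) ((u₁ : X) * s₁) = (v' : X) * (t' : X) :=
    tact_canon hbij hfact htact v u₁ t s₁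
  set P₂ : G := rho s₂⁻¹ (v' * u₂)⁻¹ with hP₂
  set st₂ : M := sig s₂⁻¹ (v' * u₂)⁻¹ with hst₂
  have h2 : tact ((v' : X) * t') ((u₂ : X) * s₂) = ((P₂⁻¹ : G) : X) * ((st₂ * t' * st₂⁻¹ : M) : X) :=
    tact_canon hbij hfact htact v' u₂ t' s₂
  set U : G := u₁ * rho s₁ u₂ with hU
  set S : M := sig s₁ u₂ * s₂ with hS
  have hsig_coe : ((sig s₁ u₂ : M) : X) = ((rho s₁ u₂ : G) : X)⁻¹ * (s₁ : X) * (u₂ : X) := by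
    have h := hfact s₁ u₂
    rw [mul_assoc, h, inv_mul_cancel_left]
  have hy : ((u₁ : X) * s₁) * ((u₂ : X) * s₂) = (U : X) * (S : X) := by
    rw [hU, hS]
    push_cast
    rw [hsig_coe]
    group
  set Q : G := rho S⁻¹ (v * U)⁻¹ with hQ
  set St : M := sig S⁻¹ (v * U)⁻¹ with hSt
  have h3 : tact ((v : X) * t) ((U : X) * S) = ((Q⁻¹ : G) : X) * ((St * t * St⁻¹ : M) : X) :=
    tact_canon hbij hfact htact v U t S
  -- key uniqueness step
  have e : (P₂ : X) * ((st₂ * st₁ : M) : X) = (Q : X) * ((St : M) : X) := by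
    push_cast
    rw [hst₂, hst₁, hSt, stilde_coe hfact s₂ (v' * u₂), stilde_coe hfact s₁ (v * u₁),
      stilde_coe hfact S (v * U)]
    push_cast
    rw [← hP₂, ← hP₁, ← hQ, hv', hU, hS]
    push_cast
    rw [hsig_coe]
    group
  have hPQ := coe_unique hbij e
  have hPQ1 : (P₂ : X) = (Q : X) := congrArg _ hPQ.1
  have hss : ((st₂ : M) : X) * (st₁ : X) = (St : X) := by
    have := congrArg (Subtype.val) hPQ.2
    push_cast at this
    exact this
  have hs2 : ((st₂ : M) : X) = (St : X) * ((st₁ : M) : X)⁻¹ := by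
    rw [← hss]; group
  rw [h1, h2, hy, h3]
  push_cast
  rw [ht', hs2, hPQ1]
  push_cast
  group


variable {k X : Type*} [Field k] [Group X] {norm : X → X} {tact : X → X → X}

lemma linTact_map (htmul : ∀ x y₁ y₂, tact (tact x y₁) y₂ = tact x (y₁ * y₂))
    (U : Submodule k (X →₀ k)) (y₁ y₂ : X) :
    (U.map (linTact k tact y₁)).map (linTact k tact y₂) = U.map (linTact k tact (y₁ * y₂)) := by
  rw [← Submodule.map_comp]
  congr 1
  show linTact k tact y₂ ∘ₗ linTact k tact y₁ = _
  rw [linTact, linTact, linTact, ← Finsupp.lmapDomain_comp]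
  congr 1
  funext x
  exact htmul x y₁ y₂

lemma linTact_map_one (htone : ∀ x, tact x 1 = x) (U : Submodule k (X →₀ k)) :
    U.map (linTact k tact 1) = U := by
  have : linTact k tact (1 : X) = LinearMap.id := by
    rw [linTact]
    have : (fun x => tact x (1 : X)) = id := funext htone
    rw [this, Finsupp.lmapDomain_id]
  rw [this, Submodule.map_id]

lemma Jsub_supported (z : X) :
    Jsub k norm z = Finsupp.supported k k (norm ⁻¹' {z}) :=
  (Finsupp.supported_eq_span_single k _).symm

lemma Jsub_map (htone : ∀ x, tact x 1 = x)
    (htmul : ∀ x y₁ y₂, tact (tact x y₁) y₂ = tact x (y₁ * y₂))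
    (hnt : ∀ x y, norm (tact x y) = y⁻¹ * norm x * y)
    (z y : X) :
    (Jsub k norm z).map (linTact k tact y) = Jsub k norm (y⁻¹ * z * y) := by
  rw [Jsub, Submodule.map_span]
  have himg : ⇑(linTact k tact y) '' ((fun x => Finsupp.single x (1 : k)) '' (norm ⁻¹' {z}))
      = (fun x => Finsupp.single x (1 : k)) '' ((fun x => tact x y) '' (norm ⁻¹' {z})) := by
    rw [← Set.image_comp, ← Set.image_comp]
    apply Set.image_congr
    intro x _
    show linTact k tact y (Finsupp.single x 1) = _
    simp [linTact, Finsupp.mapDomain_single]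
  rw [himg]
  have hset : (fun x => tact x y) '' (norm ⁻¹' {z}) = norm ⁻¹' {y⁻¹ * z * y} := by
    ext w
    constructor
    · rintro ⟨x, hx, rfl⟩
      simp only [Set.mem_preimage, Set.mem_singleton_iff] at hx ⊢
      rw [hnt, hx]
    · intro hw
      simp only [Set.mem_preimage, Set.mem_singleton_iff] at hw
      refine ⟨tact w y⁻¹, ?_, ?_⟩
      · simp only [Set.mem_preimage, Set.mem_singleton_iff]
        rw [hnt, hw]; group
      · show tact (tact w y⁻¹) y = w
        rw [htmul, inv_mul_cancel, htone]
  rw [hset, Jsub]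


end Aux

/-- **Structure of irreducible crossed submodules.**
Every irreducible crossed submodule `V ⊆ k[X]` has the form
`V = ⊕_{z∈C}(V₀ ⋊̃ z̄)` for some `z₀ ∈ Z` with conjugacy class `C` and chosen
conjugators `z̄`, where `V₀ = V ∩ J_{z₀}` is nonzero and is an irreducible
subrepresentation of the centralizer `X_{z₀}` acting on `J_{z₀}` by the
linearized `⋊̃`-action. -/
theorem structure_of_irreducible_crossed_submodules
    {k X : Type*} [Field k] [Group X] [Fintype X] (G M : Subgroup X)
    (hbij : Function.Bijective (fun p : ↥G × ↥M => (p.1 : X) * (p.2 : X)))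
    (rho : ↥M → ↥G → ↥G) (sig : ↥M → ↥G → ↥M)
    (hfact : ∀ (s : ↥M) (u : ↥G), (s : X) * (u : X) = (rho s u : X) * (sig s u : X))
    (norm : X → X)
    (hnorm : ∀ (v : ↥G) (t : ↥M), norm ((v : X) * (t : X)) = (v : X)⁻¹ * (t : X)⁻¹ * (v : X))
    (tact : X → X → X)
    (htact : ∀ (v u : ↥G) (t s : ↥M),
      tact ((v : X) * (t : X)) ((u : X) * (s : X)) =
        (rho (sig s⁻¹ (v * u)⁻¹) (v * u) : X) *
          ((sig s⁻¹ (v * u)⁻¹ : X) * (t : X) * (sig s⁻¹ (v * u)⁻¹ : X)⁻¹))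
    (V : Submodule k (X →₀ k)) (hV : IsIrreducibleCrossedSubmodule k norm tact V) :
    ∃ z₀ ∈ Set.range norm, ∃ zbar : X → X,
      (∀ z : X, IsConj z₀ z → z = (zbar z)⁻¹ * z₀ * zbar z) ∧
      V ⊓ Jsub k norm z₀ ≠ ⊥ ∧
      (∀ x ∈ Subgroup.centralizer ({z₀} : Set X),
        (V ⊓ Jsub k norm z₀).map (linTact k tact x) ≤ V ⊓ Jsub k norm z₀) ∧
      (∀ J' : Submodule k (X →₀ k), J' ≤ V ⊓ Jsub k norm z₀ →
        (∀ x ∈ Subgroup.centralizer ({z₀} : Set X), J'.map (linTact k tact x) ≤ J') →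
        J' = ⊥ ∨ J' = V ⊓ Jsub k norm z₀) ∧
      V = ⨆ z : {z : X // IsConj z₀ z},
            (V ⊓ Jsub k norm z₀).map (linTact k tact (zbar z)) := by

  classical
  obtain ⟨hVne, ⟨hstab, hdecomp⟩, hirr⟩ := hV
  have htone : ∀ x, tact x 1 = x := tact_one hbij hfact htact
  have htmul : ∀ x y₁ y₂, tact (tact x y₁) y₂ = tact x (y₁ * y₂) := tact_mul hbij hfact htact
  have hnt : ∀ x y, norm (tact x y) = y⁻¹ * norm x * y := norm_tact hbij hfact hnorm htact
  have hmapmap : ∀ (U : Submodule k (X →₀ k)) (y₁ y₂ : X),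
      (U.map (linTact k tact y₁)).map (linTact k tact y₂) = U.map (linTact k tact (y₁ * y₂)) :=
    fun U y₁ y₂ => linTact_map htmul U y₁ y₂
  have hmapone : ∀ U : Submodule k (X →₀ k), U.map (linTact k tact 1) = U :=
    fun U => linTact_map_one htone U
  have hJmap : ∀ z y, (Jsub k norm z).map (linTact k tact y) = Jsub k norm (y⁻¹ * z * y) :=
    fun z y => Jsub_map htone htmul hnt z y
  have hVmap : ∀ y, V.map (linTact k tact y) = V := by
    intro y
    refine le_antisymm (hstab y) ?_
    calc V = (V.map (linTact k tact y⁻¹)).map (linTact k tact y) := by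
          rw [hmapmap, inv_mul_cancel, hmapone]
      _ ≤ V.map (linTact k tact y) := Submodule.map_mono (hstab y⁻¹)
  have hz0 : ∃ z₀ ∈ Set.range norm, V ⊓ Jsub k norm z₀ ≠ ⊥ := by
    by_contra h
    push_neg at h
    apply hVne
    rw [hdecomp]
    exact le_bot_iff.mp (iSup₂_le fun z hz => (h z hz).le)
  obtain ⟨z₀, hz₀r, hV₀ne⟩ := hz0
  refine ⟨z₀, hz₀r, ?_⟩
  set zbar : X → X :=
    fun z => if h : IsConj z₀ z then (Classical.choose (isConj_iff.mp h))⁻¹ else 1 with hzbar_def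
  have hzb : ∀ z : X, IsConj z₀ z → z = (zbar z)⁻¹ * z₀ * zbar z := by
    intro z h
    have hc := Classical.choose_spec (isConj_iff.mp h)
    simp only [hzbar_def, dif_pos h, inv_inv]
    exact hc.symm
  have hcentconj : ∀ x ∈ Subgroup.centralizer ({z₀} : Set X), x⁻¹ * z₀ * x = z₀ := by
    intro x hx
    have h := Subgroup.mem_centralizer_iff.mp hx z₀ (Set.mem_singleton _)
    rw [mul_assoc, h]
    group
  have hcent : ∀ x ∈ Subgroup.centralizer ({z₀} : Set X),
      (V ⊓ Jsub k norm z₀).map (linTact k tact x) ≤ V ⊓ Jsub k norm z₀ := by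
    intro x hx
    refine (Submodule.map_inf_le _).trans ?_
    rw [hVmap, hJmap, hcentconj x hx]
  have hUeq : ∀ (U : Submodule k (X →₀ k)),
      (∀ x ∈ Subgroup.centralizer ({z₀} : Set X), U.map (linTact k tact x) ≤ U) →
      ∀ c ∈ Subgroup.centralizer ({z₀} : Set X), U.map (linTact k tact c) = U := by
    intro U hst c hc
    refine le_antisymm (hst c hc) ?_
    calc U = (U.map (linTact k tact c⁻¹)).map (linTact k tact c) := by
          rw [hmapmap, inv_mul_cancel, hmapone]
      _ ≤ U.map (linTact k tact c) := Submodule.map_mono (hst c⁻¹ (inv_mem hc))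
  have hzb0mem : zbar z₀ ∈ Subgroup.centralizer ({z₀} : Set X) := by
    rw [Subgroup.mem_centralizer_iff]
    rintro h hh
    rw [Set.mem_singleton_iff] at hh
    rw [hh]
    have h0 := hzb z₀ (IsConj.refl z₀)
    calc z₀ * zbar z₀ = zbar z₀ * ((zbar z₀)⁻¹ * z₀ * zbar z₀) := by group
      _ = zbar z₀ * z₀ := by rw [← h0]
  have builder : ∀ U : Submodule k (X →₀ k), U ≤ V ⊓ Jsub k norm z₀ →
      (∀ x ∈ Subgroup.centralizer ({z₀} : Set X), U.map (linTact k tact x) ≤ U) →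
      (U ≤ ⨆ z : {z : X // IsConj z₀ z}, U.map (linTact k tact (zbar z))) ∧
      ((⨆ z : {z : X // IsConj z₀ z}, U.map (linTact k tact (zbar z))) ≤ V) ∧
      IsCrossedSubmodule k norm tact
        (⨆ z : {z : X // IsConj z₀ z}, U.map (linTact k tact (zbar z))) ∧
      ((⨆ z : {z : X // IsConj z₀ z}, U.map (linTact k tact (zbar z))) ⊓ Jsub k norm z₀ ≤ U) := by
    intro U hUle hUst
    have hUV : U ≤ V := hUle.trans inf_le_left
    have hUJ : U ≤ Jsub k norm z₀ := hUle.trans inf_le_right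
    set W := ⨆ z : {z : X // IsConj z₀ z}, U.map (linTact k tact (zbar z)) with hW
    have hterm_J : ∀ z : {z : X // IsConj z₀ z},
        U.map (linTact k tact (zbar z)) ≤ Jsub k norm z.val := by
      intro z
      calc U.map (linTact k tact (zbar z)) ≤ (Jsub k norm z₀).map (linTact k tact (zbar z)) :=
            Submodule.map_mono hUJ
        _ = Jsub k norm ((zbar z.val)⁻¹ * z₀ * zbar z.val) := hJmap _ _
        _ = Jsub k norm z.val := by rw [← hzb z.val z.property]
    have hUW : U ≤ W := by
      calc U = U.map (linTact k tact (zbar z₀)) := (hUeq U hUst (zbar z₀) hzb0mem).symm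
        _ ≤ W := le_iSup (fun z : {z : X // IsConj z₀ z} => U.map (linTact k tact (zbar z)))
            ⟨z₀, IsConj.refl z₀⟩
    have hWV : W ≤ V := iSup_le fun z => (Submodule.map_mono hUV).trans (hVmap (zbar z.val)).le
    have hkey : ∀ (z : X), IsConj z₀ z → ∀ y : X, U.map (linTact k tact (zbar z * y)) ≤ W := by
      intro z hzc y
      have hconj' : IsConj z₀ (y⁻¹ * z * y) := hzc.trans (isConj_iff.mpr ⟨y⁻¹, by group⟩)
      have E : (zbar z * y)⁻¹ * z₀ * (zbar z * y)
          = (zbar (y⁻¹ * z * y))⁻¹ * z₀ * zbar (y⁻¹ * z * y) := by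
        rw [← hzb _ hconj']
        calc (zbar z * y)⁻¹ * z₀ * (zbar z * y)
            = y⁻¹ * ((zbar z)⁻¹ * z₀ * zbar z) * y := by group
          _ = y⁻¹ * z * y := by rw [← hzb z hzc]
      have hcmem : (zbar z * y) * (zbar (y⁻¹ * z * y))⁻¹ ∈
          Subgroup.centralizer ({z₀} : Set X) := by
        rw [Subgroup.mem_centralizer_iff]
        rintro h hh
        rw [Set.mem_singleton_iff] at hh
        rw [hh]
        have h2 : z₀ * (zbar z * y)
            = (zbar z * y) * ((zbar (y⁻¹ * z * y))⁻¹ * z₀ * zbar (y⁻¹ * z * y)) := by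
          rw [← E]; group
        calc z₀ * ((zbar z * y) * (zbar (y⁻¹ * z * y))⁻¹)
            = z₀ * (zbar z * y) * (zbar (y⁻¹ * z * y))⁻¹ := by group
          _ = (zbar z * y) * ((zbar (y⁻¹ * z * y))⁻¹ * z₀ * zbar (y⁻¹ * z * y)) *
              (zbar (y⁻¹ * z * y))⁻¹ := by rw [h2]
          _ = (zbar z * y) * (zbar (y⁻¹ * z * y))⁻¹ * z₀ := by group
      have hsplit : zbar z * y = ((zbar z * y) * (zbar (y⁻¹ * z * y))⁻¹) * zbar (y⁻¹ * z * y) := by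
        group
      calc U.map (linTact k tact (zbar z * y))
          = (U.map (linTact k tact ((zbar z * y) * (zbar (y⁻¹ * z * y))⁻¹))).map
              (linTact k tact (zbar (y⁻¹ * z * y))) := by rw [hmapmap, ← hsplit]
        _ ≤ U.map (linTact k tact (zbar (y⁻¹ * z * y))) := Submodule.map_mono (hUst _ hcmem)
        _ ≤ W := le_iSup (fun z : {z : X // IsConj z₀ z} => U.map (linTact k tact (zbar z)))
            ⟨y⁻¹ * z * y, hconj'⟩
    have hWstab : ∀ y : X, W.map (linTact k tact y) ≤ W := by
      intro y
      rw [hW, Submodule.map_iSup]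
      refine iSup_le fun z => ?_
      rw [hmapmap]
      exact (hkey z.val z.property y).trans_eq hW
    have hWrange : ∀ z : {z : X // IsConj z₀ z}, z.val ∈ Set.range norm := by
      intro z
      obtain ⟨x₀, hx₀⟩ := hz₀r
      exact ⟨tact x₀ (zbar z.val), by rw [hnt, hx₀, ← hzb z.val z.property]⟩
    have hWgrade : W = ⨆ z ∈ Set.range norm, W ⊓ Jsub k norm z := by
      refine le_antisymm ?_ (iSup₂_le fun z _ => inf_le_left)
      conv_lhs => rw [hW]
      refine iSup_le fun z => ?_
      refine le_trans (le_inf ((le_iSup _ z).trans_eq hW.symm) (hterm_J z)) ?_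
      exact le_iSup₂ (f := fun z _ => W ⊓ Jsub k norm z) z.val (hWrange z)
    have hWinf : W ⊓ Jsub k norm z₀ ≤ U := by
      have hA_le_J : U.map (linTact k tact (zbar z₀)) ≤ Jsub k norm z₀ :=
        hterm_J ⟨z₀, IsConj.refl z₀⟩
      have hfz : ∀ z : {z : X // IsConj z₀ z}, z.val ≠ z₀ →
          U.map (linTact k tact (zbar z)) ≤ Finsupp.supported k k {x | norm x ≠ z₀} := by
        intro z hne
        refine (hterm_J z).trans ?_
        rw [Jsub_supported]
        refine Finsupp.supported_mono ?_
        intro x hx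
        simp only [Set.mem_preimage, Set.mem_singleton_iff] at hx
        simp only [Set.mem_setOf_eq, hx]
        exact hne
      have hWle : W ≤ U.map (linTact k tact (zbar z₀)) ⊔
          Finsupp.supported k k {x | norm x ≠ z₀} := by
        conv_lhs => rw [hW]
        refine iSup_le fun z => ?_
        by_cases h : z.val = z₀
        · rw [h]
          exact le_sup_left
        · exact (hfz z h).trans le_sup_right
      have hbot : Finsupp.supported k k {x | norm x ≠ z₀} ⊓ Jsub k norm z₀ = ⊥ := by
        rw [Jsub_supported, eq_bot_iff]
        intro f hf
        rw [Submodule.mem_inf, Finsupp.mem_supported, Finsupp.mem_supported] at hf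
        rw [Submodule.mem_bot, ← Finsupp.support_eq_empty, ← Finset.subset_empty]
        intro a ha
        exact absurd (hf.2 ha) (hf.1 ha)
      calc W ⊓ Jsub k norm z₀
          ≤ (U.map (linTact k tact (zbar z₀)) ⊔ Finsupp.supported k k {x | norm x ≠ z₀}) ⊓
            Jsub k norm z₀ := inf_le_inf_right _ hWle
        _ = U.map (linTact k tact (zbar z₀)) ⊔
            (Finsupp.supported k k {x | norm x ≠ z₀} ⊓ Jsub k norm z₀) :=
            sup_inf_assoc_of_le _ hA_le_J
        _ = U.map (linTact k tact (zbar z₀)) := by rw [hbot, sup_bot_eq]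
        _ ≤ U := (hUeq U hUst (zbar z₀) hzb0mem).le
    exact ⟨hUW, hWV, ⟨hWstab, hWgrade⟩, hWinf⟩
  refine ⟨zbar, hzb, hV₀ne, hcent, ?_, ?_⟩
  · intro J' hle hst
    obtain ⟨hUW, hWV, hWcr, hWinf⟩ := builder J' hle hst
    rcases hirr _ hWcr hWV with h | h
    · exact Or.inl (le_bot_iff.mp (hUW.trans h.le))
    · refine Or.inr (le_antisymm hle ?_)
      calc V ⊓ Jsub k norm z₀
          = (⨆ z : {z : X // IsConj z₀ z}, J'.map (linTact k tact (zbar z))) ⊓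
            Jsub k norm z₀ := by rw [h]
        _ ≤ J' := hWinf
  · obtain ⟨hUW, hWV, hWcr, _⟩ := builder (V ⊓ Jsub k norm z₀) le_rfl hcent
    rcases hirr _ hWcr hWV with h | h
    · exact absurd (le_bot_iff.mp (hUW.trans h.le)) hV₀ne
    · exact h.symm
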